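/- arXiv:2109.13083 — 6 statements merged into one kernel-verified Lean document; each statement's English description precedes it below -/
import Mathlib

section
/- For all real t ≥ 0, ln(1+t) ≥ t/(1+t) + t²/(2(1+t)²) · (1 + (2/3)·ln(1+t)). -/
/-!
The difference of the two sides vanishes at `t = 0`, and its derivative is
`2t (t - ln(1+t)) / (3 (1+t)³)`, which is nonnegative for `t ≥ 0` since `ln(1+t) ≤ t`.
-/

open Real Set

noncomputable def logBennettGap (x : ℝ) : ℝ :=
  log (1 + x) - (x / (1 + x) + x ^ 2 / (2 * (1 + x) ^ 2) * (1 + 2 / 3 * log (1 + x)))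

@[simp]
theorem logBennettGap_zero : logBennettGap 0 = 0 := by
  norm_num [logBennettGap]

theorem hasDerivAt_logBennettGap {x : ℝ} (hx : 0 < 1 + x) :
    HasDerivAt logBennettGap (2 * x * (x - log (1 + x)) / (3 * (1 + x) ^ 3)) x := by
  have hne : 1 + x ≠ 0 := hx.ne'
  have hshift : HasDerivAt (fun y => 1 + y) 1 x := (hasDerivAt_id' x).const_add 1
  have hlog : HasDerivAt (fun y => log (1 + y)) (1 / (1 + x)) x := by
    simpa using hshift.log hne
  have hfrac := (hasDerivAt_id' x).fun_div hshift hne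
  have hcoef := (hasDerivAt_pow 2 x).fun_div ((hshift.fun_pow 2).const_mul 2) (by positivity)
  refine (hlog.sub (hfrac.add (hcoef.mul ((hlog.const_mul (2 / 3)).const_add 1)))).congr_deriv ?_
  field_simp
  ring

theorem monotoneOn_logBennettGap : MonotoneOn logBennettGap (Ici 0) := by
  have hderiv : ∀ x ∈ Ici (0 : ℝ), HasDerivAt logBennettGap
      (2 * x * (x - log (1 + x)) / (3 * (1 + x) ^ 3)) x :=
    fun x hx => hasDerivAt_logBennettGap (by linarith [mem_Ici.mp hx])
  refine monotoneOn_of_hasDerivWithinAt_nonneg (convex_Ici 0)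
    (fun x hx => (hderiv x hx).continuousAt.continuousWithinAt)
    (fun x hx => (hderiv x (interior_subset hx)).hasDerivWithinAt) fun x hx => ?_
  rw [interior_Ici, mem_Ioi] at hx
  have hlog_le : log (1 + x) ≤ x := by linarith [log_le_sub_one_of_pos (by linarith : 0 < 1 + x)]
  have hgap : 0 ≤ x - log (1 + x) := sub_nonneg.mpr hlog_le
  positivity

theorem logBennettGap_nonneg {x : ℝ} (hx : 0 ≤ x) : 0 ≤ logBennettGap x := by
  simpa using monotoneOn_logBennettGap self_mem_Ici (mem_Ici.mpr hx) hx

theorem log_one_add_ge (t : ℝ) (ht : 0 ≤ t) :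
    Real.log (1 + t) ≥
      t / (1 + t) + t ^ 2 / (2 * (1 + t) ^ 2) * (1 + 2 / 3 * Real.log (1 + t)) :=
  sub_nonneg.mp (logBennettGap_nonneg ht)
end

section
/- For all reals t > 0, y > 0 and every real u with u ≤ y, one has e^{tu} ≤ 1 + tu + ((e^{ty} − 1 − ty)/y²)·u². -/
/-!
Put `g v = (exp v - 1 - v) / v ^ 2`, so that `exp v = 1 + v + g v * v ^ 2` for `v ≠ 0`. With
`v = t u ≤ w = t y` the right-hand side is `1 + v + g w * v ^ 2`, so it suffices that `g` is
nondecreasing.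
On each half-line this follows from `g' v = v * h v / v ^ 4` with `h v = (v - 2) exp v + v + 2`,
which has the sign of `v` because `h 0 = 0` and `h' v = (v - 1) exp v + 1 ≥ 0`; across `0` it
follows from `g v ≤ 1 / 2 ≤ g w` for `v ≤ 0 ≤ w`.
-/

namespace Real

lemma sub_one_mul_exp_add_one_nonneg (x : ℝ) : 0 ≤ (x - 1) * exp x + 1 := by
  have h : (1 - x) * exp x ≤ exp (-x) * exp x :=
    mul_le_mul_of_nonneg_right (by linarith [add_one_le_exp (-x)]) (exp_pos x).le
  rw [← exp_add, neg_add_cancel, exp_zero] at h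
  linarith

lemma monotone_sub_two_mul_exp_add : Monotone fun x : ℝ ↦ (x - 2) * exp x + x + 2 :=
  monotone_of_hasDerivAt_nonneg
    (fun x ↦ ((((hasDerivAt_id x).sub_const 2).mul (hasDerivAt_exp x)).add
      (hasDerivAt_id x)).add_const 2 |>.congr_deriv (by simp; ring))
    sub_one_mul_exp_add_one_nonneg

lemma mul_sub_two_mul_exp_add_nonneg (x : ℝ) : 0 ≤ x * ((x - 2) * exp x + x + 2) := by
  have h0 : (0 - 2) * exp 0 + 0 + 2 = 0 := by simp
  rcases le_total 0 x with hx | hx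
  · exact mul_nonneg hx (h0 ▸ monotone_sub_two_mul_exp_add hx)
  · exact mul_nonneg_of_nonpos_of_nonpos hx (h0 ▸ monotone_sub_two_mul_exp_add hx)

lemma monotoneOn_exp_sub_one_sub_div_sq {s : Set ℝ} (hs : Convex ℝ s) (h0 : (0 : ℝ) ∉ s) :
    MonotoneOn (fun x ↦ (exp x - 1 - x) / x ^ 2) s := by
  have hne : ∀ x ∈ s, x ≠ 0 := fun x hx ↦ ne_of_mem_of_not_mem hx h0
  refine monotoneOn_of_hasDerivWithinAt_nonneg hs
    (f' := fun x ↦ x * ((x - 2) * exp x + x + 2) / (x ^ 2) ^ 2)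
    (ContinuousOn.div (by fun_prop) (by fun_prop) fun x hx ↦ pow_ne_zero 2 (hne x hx))
    (fun x hx ↦ ?_)
    (fun x _ ↦ div_nonneg (mul_sub_two_mul_exp_add_nonneg x) (by positivity))
  have hx := hne x (interior_subset hx)
  have hnum : HasDerivAt (fun x ↦ exp x - 1 - x) (exp x - 1) x :=
    ((hasDerivAt_exp x).sub_const 1).sub (hasDerivAt_id x)
  have hden : HasDerivAt (fun x : ℝ ↦ x ^ 2) (2 * x) x := by
    simpa using hasDerivAt_pow 2 x
  exact (hnum.div hden (pow_ne_zero 2 hx)).hasDerivWithinAt.congr_deriv (by field_simp; ring)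

lemma monotone_exp_sub_one_sub_sub_sq_div_two :
    Monotone fun x : ℝ ↦ exp x - 1 - x - x ^ 2 / 2 := by
  refine monotone_of_hasDerivAt_nonneg (f' := fun x ↦ exp x - 1 - x) (fun x ↦ ?_)
    (fun x ↦ show 0 ≤ exp x - 1 - x by linarith [add_one_le_exp x])
  exact (((hasDerivAt_exp x).sub_const 1).sub (hasDerivAt_id x)).sub
    ((hasDerivAt_pow 2 x).div_const 2) |>.congr_deriv (by simp)

lemma exp_le_quadratic_of_nonpos {x : ℝ} (hx : x ≤ 0) : exp x ≤ 1 + x + x ^ 2 / 2 := by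
  have := monotone_exp_sub_one_sub_sub_sq_div_two hx
  simp only [exp_zero] at this
  linarith

/-- The monotonicity of `v ↦ (exp v - 1 - v) / v ^ 2`, cleared of denominators so that it also
holds when `v` or `w` is `0`. -/
lemma exp_sub_one_sub_mul_sq_le {v w : ℝ} (hvw : v ≤ w) :
    (exp v - 1 - v) * w ^ 2 ≤ (exp w - 1 - w) * v ^ 2 := by
  have of_monotoneOn {s : Set ℝ} (hs : Convex ℝ s) (h0 : (0 : ℝ) ∉ s) (hv : v ∈ s) (hw : w ∈ s) :
      (exp v - 1 - v) * w ^ 2 ≤ (exp w - 1 - w) * v ^ 2 := by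
    have := monotoneOn_exp_sub_one_sub_div_sq hs h0 hv hw hvw
    rwa [div_le_div_iff₀ (by positivity [ne_of_mem_of_not_mem hv h0])
      (by positivity [ne_of_mem_of_not_mem hw h0])] at this
  rcases lt_or_ge 0 v with hv | hv
  · exact of_monotoneOn (convex_Ioi 0) (by simp) hv (hv.trans_le hvw)
  rcases lt_or_ge w 0 with hw | hw
  · exact of_monotoneOn (convex_Iio 0) (by simp) (hvw.trans_lt hw) hw
  calc (exp v - 1 - v) * w ^ 2 ≤ v ^ 2 / 2 * w ^ 2 := by
        gcongr; linarith [exp_le_quadratic_of_nonpos hv]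
    _ = w ^ 2 / 2 * v ^ 2 := by ring
    _ ≤ (exp w - 1 - w) * v ^ 2 := by
        gcongr; linarith [quadratic_le_exp_of_nonneg hw]

lemma exp_le_one_add_add_mul_sq {v w : ℝ} (hvw : v ≤ w) (hw : w ≠ 0) :
    exp v ≤ 1 + v + (exp w - 1 - w) / w ^ 2 * v ^ 2 := by
  have := exp_sub_one_sub_mul_sq_le hvw
  rw [div_mul_eq_mul_div, ← sub_le_iff_le_add', le_div_iff₀ (by positivity)]
  linarith

end Real

theorem exp_le_quadratic_upper (t y u : ℝ) (ht : 0 < t) (hy : 0 < y) (hu : u ≤ y) :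
    Real.exp (t * u) ≤ 1 + t * u + (Real.exp (t * y) - 1 - t * y) / y ^ 2 * u ^ 2 := by
  have hscale : (Real.exp (t * y) - 1 - t * y) / (t * y) ^ 2 * (t * u) ^ 2 =
      (Real.exp (t * y) - 1 - t * y) / y ^ 2 * u ^ 2 := by
    field_simp
  exact hscale ▸ Real.exp_le_one_add_add_mul_sq (mul_le_mul_of_nonneg_left hu ht.le)
    (mul_pos ht hy).ne'
end

section
/- Let (s_n) be a sequence of positive reals with s_n² = ∑_{i=1}^n σ_i² for nonnegative σ_i², s_n² → ∞, and limsup_{n→∞} s_{n+1}²/s_n² < ∞. Then for every δ > 0, ∑_{n} s_n^{−2} (log s_n²)^{δ−1} σ_n² = ∞, where log x := ln max(e,x). -/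
/-!
Once `s_n² ≥ max(e, C)`, concavity of `x ↦ x^δ` (for `δ ≤ 1`), `log x ≤ x - 1` and the ratio
bound show that the increment `(log s_{n+1}²)^δ - (log s_n²)^δ` is at most a constant times the
`(n+1)`-st term of the series. These increments telescope to `(log s_n²)^δ → ∞`, so the series
diverges. For `δ > 1` the terms dominate those for `δ = 1`.
-/

open Filter Real

/-- `g n - ∑_{i<n} f i` is eventually antitone, while the partial sums of `f` are bounded. -/
lemma not_summable_of_tendsto_of_sub_le {g f : ℕ → ℝ} (hg : Tendsto g atTop atTop)
    (h : ∀ᶠ n in atTop, g (n + 1) - g n ≤ f n) : ¬Summable f := by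
  intro hf
  obtain ⟨N, hN⟩ := eventually_atTop.1 h
  have hdecr : ∀ n ≥ N,
      g n - ∑ i ∈ Finset.range n, f i ≤ g N - ∑ i ∈ Finset.range N, f i := by
    intro n hn
    induction n, hn using Nat.le_induction with
    | base => exact le_rfl
    | succ n hn ih =>
      rw [Finset.sum_range_succ]
      linarith [hN n hn]
  obtain ⟨B, hB⟩ := hf.hasSum.tendsto_sum_nat.bddAbove_range
  obtain ⟨n, hgn, hn⟩ :=
    ((hg.eventually_gt_atTop (g N - ∑ i ∈ Finset.range N, f i + B)).and
      (eventually_ge_atTop N)).exists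
  linarith [hdecr n hn, hB ⟨n, rfl⟩]

lemma rpow_sub_rpow_le_mul_rpow_sub_one {u v δ : ℝ} (hu : 0 < u) (hv : 0 ≤ v)
    (hδ0 : 0 ≤ δ) (hδ1 : δ ≤ 1) : v ^ δ - u ^ δ ≤ δ * u ^ (δ - 1) * (v - u) := by
  have hs : -1 ≤ (v - u) / u := by rw [le_div_iff₀ hu]; linarith
  have hbern : (1 + (v - u) / u) ^ δ ≤ 1 + δ * ((v - u) / u) :=
    rpow_one_add_le_one_add_mul_self hs hδ0 hδ1
  have hv_eq : v = u * (1 + (v - u) / u) := by field_simp; ring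
  calc v ^ δ - u ^ δ = u ^ δ * (1 + (v - u) / u) ^ δ - u ^ δ := by
        rw [← mul_rpow hu.le (by linarith), ← hv_eq]
    _ ≤ u ^ δ * (1 + δ * ((v - u) / u)) - u ^ δ := by gcongr
    _ = δ * (u ^ δ / u) * (v - u) := by field_simp; ring
    _ = δ * u ^ (δ - 1) * (v - u) := by rw [rpow_sub_one hu.ne']

lemma log_sub_log_le_sub_div {a b : ℝ} (ha : 0 < a) (hb : 0 < b) :
    log b - log a ≤ (b - a) / a := by
  rw [← log_div hb.ne' ha.ne', sub_div, div_self ha.ne']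
  exact log_le_sub_one_of_pos (div_pos hb ha)

/-- `C ≤ a` gives `log b ≤ 2 log a`, which makes `(log a)^(δ-1)` comparable to
`(log b)^(δ-1)`. -/
lemma log_rpow_sub_log_rpow_le {a b C δ : ℝ} (hδ0 : 0 ≤ δ) (hδ1 : δ ≤ 1) (ha : 1 < a)
    (hab : a ≤ b) (hbC : b ≤ C * a) (hCa : C ≤ a) :
    log b ^ δ - log a ^ δ ≤ δ * 2 ^ (1 - δ) * C * (b⁻¹ * log b ^ (δ - 1) * (b - a)) := by
  have ha0 : 0 < a := by linarith
  have hb0 : 0 < b := by linarith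
  have hC0 : 0 < C := pos_of_mul_pos_left (hb0.trans_le hbC) ha0.le
  set u := log a
  set v := log b
  have hu : 0 < u := log_pos ha
  have huv : u ≤ v := log_le_log ha0 hab
  have hv_le : v ≤ 2 * u := by
    have : v ≤ log C + u := by
      rw [← log_mul hC0.ne' ha0.ne']; exact log_le_log hb0 hbC
    linarith [log_le_log hC0 hCa]
  have hu_pow : u ^ (δ - 1) ≤ 2 ^ (1 - δ) * v ^ (δ - 1) := by
    calc u ^ (δ - 1) ≤ (v / 2) ^ (δ - 1) :=
          rpow_le_rpow_of_nonpos (by linarith) (by linarith) (by linarith)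
      _ = 2 ^ (1 - δ) * v ^ (δ - 1) := by
          rw [div_rpow (by linarith) zero_le_two, div_eq_mul_inv, ← rpow_neg zero_le_two,
            neg_sub, mul_comm]
  have hvu : v - u ≤ C * ((b - a) / b) := by
    calc v - u ≤ (b - a) / a := log_sub_log_le_sub_div ha0 hb0
      _ ≤ C * ((b - a) / b) := by
          rw [mul_div_assoc', div_le_div_iff₀ ha0 hb0]
          nlinarith
  calc v ^ δ - u ^ δ ≤ δ * u ^ (δ - 1) * (v - u) :=
        rpow_sub_rpow_le_mul_rpow_sub_one hu (by linarith) hδ0 hδ1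
    _ ≤ δ * (2 ^ (1 - δ) * v ^ (δ - 1)) * (C * ((b - a) / b)) := by
        gcongr
        exact mul_nonneg hδ0
          (mul_nonneg (rpow_nonneg zero_le_two _) (rpow_nonneg (hu.le.trans huv) _))
    _ = δ * 2 ^ (1 - δ) * C * (b⁻¹ * v ^ (δ - 1) * (b - a)) := by ring

lemma one_le_log_max_exp_one (x : ℝ) : 1 ≤ log (max (exp 1) x) :=
  (le_log_iff_exp_le (lt_max_of_lt_left (exp_pos 1))).2 (le_max_left _ _)

theorem sum_log_pow_diverges (σ : ℕ → ℝ) (hσ : ∀ n, 0 ≤ σ n)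
    (s2 : ℕ → ℝ) (hs2 : ∀ n, s2 n = ∑ i ∈ Finset.range (n + 1), σ i)
    (hpos : ∀ n, 0 < s2 n)
    (htend : Tendsto s2 atTop atTop)
    (hratio : ∃ C : ℝ, ∀ᶠ n in atTop, s2 (n + 1) / s2 n ≤ C) :
    ∀ δ : ℝ, 0 < δ →
      ¬ Summable (fun n => (s2 n)⁻¹ *
        Real.log (max (Real.exp 1) (s2 n)) ^ (δ - 1) * σ n) := by
  intro δ hδ
  wlog hδ1 : δ ≤ 1 generalizing δ
  · refine fun hsum ↦ this 1 one_pos le_rfl (hsum.of_nonneg_of_le (fun n ↦ ?_) fun n ↦ ?_)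
    · simp only [sub_self, rpow_zero, mul_one]
      exact mul_nonneg (inv_nonneg.2 (hpos n).le) (hσ n)
    · exact mul_le_mul_of_nonneg_right (mul_le_mul_of_nonneg_left
        (rpow_le_rpow_of_exponent_le (one_le_log_max_exp_one _) (by linarith))
        (inv_nonneg.2 (hpos n).le)) (hσ n)
  have hσ_succ : ∀ n, σ (n + 1) = s2 (n + 1) - s2 n := fun n ↦ by
    rw [hs2, hs2, Finset.sum_range_succ _ (n + 1)]; ring
  have hmono : Monotone s2 := monotone_nat_of_le_succ fun n ↦ by linarith [hσ_succ n, hσ (n + 1)]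
  obtain ⟨C, hC⟩ := hratio
  have hlog : Tendsto (fun n ↦ log (s2 n) ^ δ) atTop atTop :=
    (tendsto_rpow_atTop hδ).comp (tendsto_log_atTop.comp htend)
  intro hsum
  refine not_summable_of_tendsto_of_sub_le hlog (f := fun n ↦ δ * 2 ^ (1 - δ) * C *
    ((s2 (n + 1))⁻¹ * log (max (exp 1) (s2 (n + 1))) ^ (δ - 1) * σ (n + 1))) ?_
    (((summable_nat_add_iff 1).2 hsum).mul_left _)
  filter_upwards [hC, htend.eventually_ge_atTop (exp 1), htend.eventually_ge_atTop C]
    with n hCn hen hCle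
  have hmax : max (exp 1) (s2 (n + 1)) = s2 (n + 1) :=
    max_eq_right (hen.trans (hmono n.le_succ))
  rw [hmax, hσ_succ]
  exact log_rpow_sub_log_rpow_le hδ.le hδ1 ((one_lt_exp_iff.2 one_pos).trans_le hen)
    (hmono n.le_succ) ((div_le_iff₀ (hpos n)).1 hCn) hCle
end

section
/- Let (a_n) be a nondecreasing sequence of positive reals with a_n → ∞ and a_{n+1}/a_n → 1. Then for every λ > 1 there exists a strictly increasing sequence (n_k) of natural numbers such that λ·a_{n_k} ≤ a_{n_{k+1}} ≤ λ³·a_{n_k + 1} for all k. -/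
/-!
Since `a (n + 1) / a n → 1`, from some index `N` on every step of `a` changes it by a factor
between `λ⁻¹` and `λ`. Starting at `N`, let `n (k + 1)` be the first index after `n k` at which
`a` reaches `λ * a (n k)`. The index just before `n (k + 1)` still lies below that level, so one
step up gives `a (n (k + 1)) ≤ λ² * a (n k)`, and one step back from `n k + 1` gives the third
factor `λ`.
-/

open Filter

lemma Filter.Tendsto.exists_lt_mul_le {a : ℕ → ℝ} (htend : Tendsto a atTop atTop) (c : ℝ)
    (p : ℕ) : ∃ m, p < m ∧ c * a p ≤ a m :=
  ((eventually_gt_atTop p).and (htend.eventually_ge_atTop (c * a p))).exists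

lemma eventually_step_bounds {a : ℕ → ℝ} (htend : Tendsto a atTop atTop)
    (hratio : Tendsto (fun n => a (n + 1) / a n) atTop (nhds 1)) {c : ℝ} (hc : 1 < c) :
    ∀ᶠ n in atTop, 0 ≤ a n ∧ a (n + 1) ≤ c * a n ∧ a n ≤ c * a (n + 1) := by
  have hc0 : 0 < c := zero_lt_one.trans hc
  filter_upwards [htend.eventually_gt_atTop 0, hratio.eventually (eventually_le_nhds hc),
    hratio.eventually (eventually_ge_nhds (inv_lt_one_of_one_lt₀ hc))] with n hn hle hge
  rw [div_le_iff₀ hn] at hle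
  rw [le_div_iff₀ hn] at hge
  refine ⟨hn.le, by linarith, ?_⟩
  calc a n = c * (c⁻¹ * a n) := by field_simp
    _ ≤ c * a (n + 1) := by gcongr

lemma exists_strictMono_first_exceeding {a : ℕ → ℝ} {c : ℝ}
    (hunb : ∀ p, ∃ m, p < m ∧ c * a p ≤ a m) (N : ℕ) :
    ∃ n : ℕ → ℕ, StrictMono n ∧ n 0 = N ∧ ∀ k, c * a (n k) ≤ a (n (k + 1)) ∧
      ∀ j, n k < j → j < n (k + 1) → a j < c * a (n k) := by
  have hfirst : ∀ p, ∃ m, (p < m ∧ c * a p ≤ a m) ∧ ∀ j, p < j → j < m → a j < c * a p :=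
    fun p => ⟨Nat.find (hunb p), Nat.find_spec (hunb p), fun j hpj hj =>
      not_le.1 fun h => Nat.find_min (hunb p) hj ⟨hpj, h⟩⟩
  choose next hnext hmin using hfirst
  refine ⟨fun k => next^[k] N, strictMono_nat_of_lt_succ fun k => ?_, rfl, fun k => ?_⟩
  · rw [Function.iterate_succ_apply']
    exact (hnext _).1
  · simp only [Function.iterate_succ_apply']
    exact ⟨(hnext _).2, hmin _⟩

lemma le_cube_mul_of_first_exceeding {a : ℕ → ℝ} {c : ℝ} (hc : 1 ≤ c) {p m : ℕ} (hpm : p < m)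
    (hfirst : ∀ j, p < j → j < m → a j < c * a p) (hp : 0 ≤ a p)
    (hback : a p ≤ c * a (p + 1)) (hstep : ∀ j, p ≤ j → a (j + 1) ≤ c * a j) :
    a m ≤ c ^ 3 * a (p + 1) := by
  obtain ⟨j, rfl⟩ : ∃ j, m = j + 1 := ⟨m - 1, by omega⟩
  have hj : a j ≤ c * a p := by
    rcases (show p = j ∨ p < j by omega) with rfl | hpj
    · exact le_mul_of_one_le_left hp hc
    · exact (hfirst j hpj j.lt_succ_self).le
  have hc0 : 0 ≤ c := zero_le_one.trans hc
  calc a (j + 1) ≤ c * a j := hstep j (by omega)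
    _ ≤ c * (c * a p) := by gcongr
    _ ≤ c * (c * (c * a (p + 1))) := by gcongr
    _ = c ^ 3 * a (p + 1) := by ring

theorem wittmann_block_selection_general (a : ℕ → ℝ) (htend : Tendsto a atTop atTop)
    (hratio : Tendsto (fun n => a (n + 1) / a n) atTop (nhds 1)) :
    ∀ lam : ℝ, 1 < lam →
      ∃ n : ℕ → ℕ, StrictMono n ∧
        ∀ k, lam * a (n k) ≤ a (n (k + 1)) ∧ a (n (k + 1)) ≤ lam ^ 3 * a (n k + 1) := by
  intro lam hlam
  obtain ⟨N, hN⟩ := eventually_atTop.1 (eventually_step_bounds htend hratio hlam)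
  obtain ⟨n, hn, hn0, hblock⟩ := exists_strictMono_first_exceeding (htend.exists_lt_mul_le lam) N
  refine ⟨n, hn, fun k => ⟨(hblock k).1, ?_⟩⟩
  have hNk : N ≤ n k := hn0 ▸ hn.monotone k.zero_le
  obtain ⟨hpos, -, hback⟩ := hN _ hNk
  exact le_cube_mul_of_first_exceeding hlam.le (hn k.lt_succ_self) (hblock k).2 hpos hback
    fun j hj => (hN j (hNk.trans hj)).2.1

theorem wittmann_block_selection (a : ℕ → ℝ) (hpos : ∀ n, 0 < a n)
    (hmono : Monotone a) (htend : Tendsto a atTop atTop)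
    (hratio : Tendsto (fun n => a (n + 1) / a n) atTop (nhds 1)) :
    ∀ lam : ℝ, 1 < lam →
      ∃ n : ℕ → ℕ, StrictMono n ∧
        ∀ k, lam * a (n k) ≤ a (n (k + 1)) ∧ a (n (k + 1)) ≤ lam ^ 3 * a (n k + 1) :=
  wittmann_block_selection_general a htend hratio
end

section
/- Let X be a nonnegative random variable with E[X²/loglog X] < ∞, where loglog x := ln max(e, ln max(e,x)), and let d_n = √(2 n loglog n). Then E[(X − δ d_n)⁺] = o(√(loglog n / n)) as n → ∞, for every δ > 0. -/
open MeasureTheory Filter Asymptotics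

/-- `loglog x = ln (max e (ln (max e x)))`. -/
noncomputable def loglog (x : ℝ) : ℝ :=
  Real.log (max (Real.exp 1) (Real.log (max (Real.exp 1) x)))

/-!
Since `x / loglog x` is nondecreasing on `(0, ∞)`, on the event `{X > t}` we have
`X ≤ (loglog t / t) · X² / loglog X`, hence
`E[(X - t)⁺] ≤ (loglog t / t) · E[X² / loglog X; X > t]`,
and the last expectation tends to `0` as `t → ∞` by dominated convergence.
For `t = δ dₙ ≤ n²` one has `loglog t ≤ loglog (n²) ≤ 2 loglog n`, so that
`loglog t / t = O(√(loglog n / n))`.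
-/

open Real

-- `loglog x` is definitionally `logE (logE x)`.
noncomputable def logE (y : ℝ) : ℝ := log (max (exp 1) y)

lemma one_le_logE (y : ℝ) : 1 ≤ logE y := by
  simpa [logE] using log_le_log (exp_pos 1) (le_max_left (exp 1) y)

lemma logE_mono : Monotone logE := fun _ _ h =>
  log_le_log (lt_max_of_lt_left (exp_pos 1)) (max_le_max le_rfl h)

lemma logE_le_max_one (y : ℝ) : logE y ≤ max 1 y := by
  rcases le_total y (exp 1) with hy | hy
  · simp [logE, max_eq_left hy]
  · rw [logE, max_eq_right hy]
    exact (log_le_self ((exp_pos 1).le.trans hy)).trans (le_max_right 1 y)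

lemma logE_sub_logE_le {y z : ℝ} (hz : 0 < z) (hzy : z ≤ y) :
    logE y - logE z ≤ y / z - 1 := by
  have he : 0 < max (exp 1) z := lt_max_of_lt_left (exp_pos 1)
  have hratio : max (exp 1) y / max (exp 1) z ≤ y / z := by
    rw [div_le_div_iff₀ he hz]
    rcases le_total y (exp 1) with hy | hy <;> rcases le_total z (exp 1) with hz' | hz' <;>
      simp only [max_eq_left, max_eq_right, hy, hz'] <;> nlinarith
  rw [logE, logE, ← log_div (lt_max_of_lt_left (exp_pos 1)).ne' he.ne']
  exact (log_le_sub_one_of_pos (div_pos (lt_max_of_lt_left (exp_pos 1)) he)).trans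
    (by linarith)

lemma logE_sq_le {y : ℝ} (hy : 0 ≤ y) : logE (y ^ 2) ≤ 2 * logE y := by
  have hm : max (exp 1) (y ^ 2) ≤ max (exp 1) y ^ 2 := by
    have h1 : 1 ≤ exp 1 := one_le_exp zero_le_one
    refine max_le ?_ (pow_le_pow_left₀ hy (le_max_right _ _) 2)
    nlinarith [le_max_left (exp 1) y]
  calc logE (y ^ 2) ≤ log (max (exp 1) y ^ 2) := log_le_log (lt_max_of_lt_left (exp_pos 1)) hm
    _ = 2 * logE y := by rw [log_pow, logE]; norm_num

lemma logE_two_mul_le (y : ℝ) : logE (2 * y) ≤ 1 + logE y := by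
  have hm : max (exp 1) (2 * y) ≤ 2 * max (exp 1) y :=
    max_le (by linarith [exp_pos 1, le_max_left (exp 1) y]) (by linarith [le_max_right (exp 1) y])
  calc logE (2 * y) ≤ log (2 * max (exp 1) y) := log_le_log (lt_max_of_lt_left (exp_pos 1)) hm
    _ = log 2 + logE y := log_mul two_ne_zero (lt_max_of_lt_left (exp_pos 1)).ne'
    _ ≤ 1 + logE y := by linarith [log_two_lt_d9]

lemma one_le_loglog (x : ℝ) : 1 ≤ loglog x := one_le_logE _

lemma loglog_pos (x : ℝ) : 0 < loglog x := one_pos.trans_le (one_le_loglog x)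

lemma loglog_mono : Monotone loglog := logE_mono.comp logE_mono

lemma loglog_le_self {x : ℝ} (hx : 1 ≤ x) : loglog x ≤ x := by
  refine (logE_le_max_one _).trans (max_le hx ?_)
  exact (logE_le_max_one x).trans (max_le hx le_rfl)

lemma loglog_sq_le {x : ℝ} (hx : 0 ≤ x) : loglog (x ^ 2) ≤ 2 * loglog x :=
  calc loglog (x ^ 2) ≤ logE (2 * logE x) := logE_mono (logE_sq_le hx)
    _ ≤ 1 + loglog x := logE_two_mul_le _
    _ ≤ 2 * loglog x := by linarith [one_le_loglog x]

lemma loglog_mul_le_mul {a x : ℝ} (ha : 0 < a) (hax : a ≤ x) :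
    loglog x * a ≤ loglog a * x := by
  have hla : 1 ≤ logE a := one_le_logE a
  have hlax : logE a ≤ logE x := logE_mono hax
  have hxa : 1 ≤ x / a := (one_le_div ha).mpr hax
  have key : loglog x - loglog a ≤ (x / a - 1) * loglog a :=
    calc loglog x - loglog a ≤ logE x / logE a - 1 :=
          logE_sub_logE_le (one_pos.trans_le hla) hlax
      _ = (logE x - logE a) / logE a := by field_simp
      _ ≤ logE x - logE a := div_le_self (by linarith) hla
      _ ≤ x / a - 1 := logE_sub_logE_le ha hax
      _ ≤ (x / a - 1) * loglog a := le_mul_of_one_le_right (by linarith) (one_le_loglog a)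
  have : loglog x ≤ x / a * loglog a := by linarith
  calc loglog x * a ≤ x / a * loglog a * a := mul_le_mul_of_nonneg_right this ha.le
    _ = loglog a * x := by field_simp

lemma le_loglog_div_mul_sq_div_loglog {t x : ℝ} (ht : 0 < t) (htx : t < x) :
    x ≤ loglog t / t * (x ^ 2 / loglog x) := by
  have hx : 0 < x := ht.trans htx
  rw [div_mul_div_comm, le_div_iff₀ (mul_pos ht (loglog_pos x))]
  calc x * (t * loglog x) = x * (loglog x * t) := by ring
    _ ≤ x * (loglog t * x) := mul_le_mul_of_nonneg_left (loglog_mul_le_mul ht htx.le) hx.le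
    _ = loglog t * x ^ 2 := by ring

section Tail

variable {Ω : Type*} [MeasurableSpace Ω] {μ : Measure Ω} {X : Ω → ℝ}

lemma tendsto_setIntegral_lt_atTop {Y : Ω → ℝ} (hX : Measurable X) (hY : Integrable Y μ) :
    Tendsto (fun t : ℝ => ∫ ω in {ω | t < X ω}, Y ω ∂μ) atTop (nhds 0) := by
  have hS (t : ℝ) : MeasurableSet {ω | t < X ω} := measurableSet_lt measurable_const hX
  simp_rw [← integral_indicator (hS _)]
  have hlim : ∀ ω, Tendsto (fun t : ℝ => {ω | t < X ω}.indicator Y ω) atTop (nhds 0) := by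
    intro ω
    refine tendsto_const_nhds.congr' ?_
    filter_upwards [eventually_ge_atTop (X ω)] with t ht
    exact (Set.indicator_of_notMem (show ω ∉ {ω | t < X ω} from not_lt.mpr ht) Y).symm
  simpa using tendsto_integral_filter_of_dominated_convergence (fun ω => ‖Y ω‖)
    (Eventually.of_forall fun t => (hY.indicator (hS t)).aestronglyMeasurable)
    (Eventually.of_forall fun t => Eventually.of_forall fun ω => norm_indicator_le_norm_self Y ω)
    hY.norm (Eventually.of_forall hlim)

lemma integral_max_sub_le (hX : Measurable X)
    (hY : Integrable (fun ω => X ω ^ 2 / loglog (X ω)) μ) {t : ℝ} (ht : 0 < t) :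
    ∫ ω, max (X ω - t) 0 ∂μ ≤
      loglog t / t * ∫ ω in {ω | t < X ω}, X ω ^ 2 / loglog (X ω) ∂μ := by
  have hS : MeasurableSet {ω | t < X ω} := measurableSet_lt measurable_const hX
  rw [← integral_const_mul, ← integral_indicator hS]
  refine integral_mono_of_nonneg (Eventually.of_forall fun ω => le_max_right _ _)
    ((hY.const_mul _).indicator hS) (Eventually.of_forall fun ω => ?_)
  dsimp only
  by_cases htx : t < X ω
  · rw [Set.indicator_of_mem (show ω ∈ {ω | t < X ω} from htx),
      max_eq_left (sub_nonneg.mpr htx.le)]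
    linarith [le_loglog_div_mul_sq_div_loglog ht htx]
  · rw [Set.indicator_of_notMem (show ω ∉ {ω | t < X ω} from htx), max_eq_right (by linarith)]

end Tail

lemma isBigO_loglog_div {δ : ℝ} (hδ : 0 < δ) :
    (fun n : ℕ => loglog (δ * √(2 * n * loglog n)) / (δ * √(2 * n * loglog n)))
      =O[atTop] (fun n : ℕ => √(loglog n / n)) := by
  refine IsBigO.of_bound (√2 / δ) ?_
  filter_upwards [eventually_ge_atTop 1, eventually_ge_atTop ⌈2 * δ ^ 2⌉₊] with n hn1 hnδ
  have hn : (1 : ℝ) ≤ n := by exact_mod_cast hn1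
  have hnδ : 2 * δ ^ 2 ≤ n := (Nat.le_ceil _).trans (by exact_mod_cast hnδ)
  set L := loglog n
  have hL : 1 ≤ L := one_le_loglog n
  set t := δ * √(2 * n * L)
  have ht : 0 < t := by positivity
  have hsq : t ^ 2 = 2 * δ ^ 2 * n * L := by
    rw [mul_pow, sq_sqrt (by positivity)]; ring
  have htn : t ≤ (n : ℝ) ^ 2 := by
    rw [← pow_le_pow_iff_left₀ ht.le (by positivity) two_ne_zero, hsq]
    have hLn : L ≤ n := loglog_le_self hn
    calc 2 * δ ^ 2 * n * L ≤ n * n * n := by gcongr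
      _ ≤ n * n * n * n := le_mul_of_one_le_right (by positivity) hn
      _ = (n ^ 2) ^ 2 := by ring
  have hllt : loglog t ≤ 2 * L :=
    (loglog_mono htn).trans (loglog_sq_le (by positivity))
  have hbound : t * (√2 / δ * √(L / n)) = 2 * L := by
    have hsqrt : √(2 * n * L) * √2 * √(L / n) = 2 * L := by
      rw [← sqrt_mul (by positivity), ← sqrt_mul (by positivity),
        show 2 * n * L * 2 * (L / n) = (2 * L) ^ 2 by field_simp, sqrt_sq (by positivity)]
    rw [← hsqrt]
    simp only [t]
    field_simp
  rw [norm_of_nonneg (div_nonneg (loglog_pos t).le ht.le), norm_of_nonneg (sqrt_nonneg _),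
    div_le_iff₀ ht, mul_comm, hbound]
  exact hllt

theorem truncated_mean_littleO_general {Ω : Type*} [MeasurableSpace Ω]
    (P : Measure Ω)
    (X : Ω → ℝ) (hmeas : Measurable X)
    (hint : Integrable (fun ω => X ω ^ 2 / loglog (X ω)) P)
    (d : ℕ → ℝ) (hd : ∀ n : ℕ, d n = Real.sqrt (2 * n * loglog n)) :
    ∀ δ : ℝ, 0 < δ →
      (fun n : ℕ => ∫ ω, max (X ω - δ * d n) 0 ∂P)
        =o[atTop] (fun n : ℕ => Real.sqrt (loglog n / n)) := by
  intro δ hδ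
  obtain rfl : d = fun n : ℕ => √(2 * n * loglog n) := funext hd
  have hd_tendsto : Tendsto (fun n : ℕ => √(2 * n * loglog n)) atTop atTop := by
    refine tendsto_atTop_mono (fun n => sqrt_le_sqrt ?_)
      (tendsto_sqrt_atTop.comp tendsto_natCast_atTop_atTop)
    nlinarith [one_le_loglog n, (n.cast_nonneg : (0 : ℝ) ≤ n)]
  have ht := hd_tendsto.const_mul_atTop hδ
  have htail := (isLittleO_one_iff ℝ).mpr ((tendsto_setIntegral_lt_atTop hmeas hint).comp ht)
  have hprod := (isBigO_loglog_div hδ).mul_isLittleO htail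
  simp only [mul_one] at hprod
  refine IsBigO.trans_isLittleO (IsBigO.of_bound 1 ?_) hprod
  filter_upwards [ht.eventually_gt_atTop 0] with n hn
  rw [one_mul, norm_of_nonneg (integral_nonneg fun ω => le_max_right (X ω - _) 0)]
  exact (integral_max_sub_le hmeas hint hn).trans (le_norm_self _)

theorem truncated_mean_littleO {Ω : Type*} [MeasurableSpace Ω]
    (P : Measure Ω) [IsProbabilityMeasure P]
    (X : Ω → ℝ) (hmeas : Measurable X) (hnonneg : ∀ ω, 0 ≤ X ω)
    (hint : Integrable (fun ω => X ω ^ 2 / loglog (X ω)) P)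
    (d : ℕ → ℝ) (hd : ∀ n : ℕ, d n = Real.sqrt (2 * n * loglog n)) :
    ∀ δ : ℝ, 0 < δ →
      (fun n : ℕ => ∫ ω, max (X ω - δ * d n) 0 ∂P)
        =o[atTop] (fun n : ℕ => Real.sqrt (loglog n / n)) :=
  truncated_mean_littleO_general P X hmeas hint d hd
end

section
/- Let X₁,…,X_n be independent centered random variables on a probability space, p ≥ 2, B² = ∑ E X_i², S_k = ∑_{i≤k} X_i. Then for every x > 0 and 0 < δ ≤ 1 there is a constant C_p depending only on p such that P(max_{k≤n} S_k ≥ x) ≤ C_p δ^{−p} x^{−p} ∑_{i=1}^n E[(X_i⁺)^p] + exp(−x²/(2(1+δ)B²)). -/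
/-!
Truncate at the level `y = δ x / 4`. Either some `X i` exceeds `y`, which by Markov's inequality
has probability at most `y ^ (-p) * ∑ E[(X i⁺) ^ p]`, or the partial sums of the truncated
variables `min (X i) y` reach `x`. For the latter, a maximal Chernoff bound (split according to
the first time the partial sums reach `x`; the later increments are independent of that event)
gives `exp (-t x) * ∏ max (E exp (t min (X i) y)) 1`. A Taylor-type bound for `exp (t z)`,
`z ≤ y`, gives
`E exp (t min (X i) y) ≤ exp ((1 + δ/2) t² E[X i²] / 2 + exp (t y) (2t/δ)^p E[(X i⁺)^p])`.
Choosing `t = 2σ/x`, where `σ` is the smaller of `x² / (2 (1 + δ) B²)` and minus the logarithm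
of the polynomial term, balances the two exponential contributions.
-/

open MeasureTheory ProbabilityTheory Finset Real

lemma Real.exp_le_one_add_add_sq_div_two_of_nonpos {z : ℝ} (hz : z ≤ 0) :
    exp z ≤ 1 + z + z ^ 2 / 2 := by
  have hderiv : ∀ w, HasDerivAt (fun w => 1 + w + w ^ 2 / 2 - exp w) (1 + w - exp w) w :=
    fun w => ((((hasDerivAt_id w).const_add 1).add
      ((hasDerivAt_pow 2 w).div_const 2)).sub (hasDerivAt_exp w)).congr_deriv (by simp)
  have hanti : Antitone (fun w => 1 + w + w ^ 2 / 2 - exp w) :=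
    antitone_of_deriv_nonpos (fun w => (hderiv w).differentiableAt) fun w => by
      rw [(hderiv w).deriv]
      linarith [add_one_le_exp w]
  simpa using hanti hz

lemma Real.exp_le_one_add_add_mul_sq_of_le_half {u δ : ℝ} (hu0 : 0 ≤ u) (hu : u ≤ δ / 2)
    (hδ1 : δ ≤ 1) : exp u ≤ 1 + u + (1 + δ / 2) * u ^ 2 / 2 := by
  have h := exp_bound' hu0 (by linarith) (n := 3) (by norm_num)
  norm_num [sum_range_succ, Nat.factorial] at h
  nlinarith [sq_nonneg u]

lemma Real.exp_le_one_add_two_mul {r : ℝ} (h0 : 0 ≤ r) (h1 : r ≤ 1) : exp r ≤ 1 + 2 * r := by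
  have h := exp_bound' h0 h1 (n := 2) (by norm_num)
  norm_num [sum_range_succ, Nat.factorial] at h
  nlinarith

lemma Real.rpow_le_rpow_self_mul_exp {v q : ℝ} (hv : 0 < v) (hq : 0 < q) :
    v ^ q ≤ q ^ q * exp v := by
  rw [rpow_def_of_pos hv, rpow_def_of_pos hq, ← exp_add, exp_le_exp]
  have hlog := log_le_sub_one_of_pos (div_pos hv hq)
  rw [log_div hv.ne' hq.ne'] at hlog
  have := mul_le_mul_of_nonneg_left hlog hq.le
  rw [mul_sub, mul_sub, mul_div_cancel₀ _ hq.ne'] at this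
  linarith

lemma Real.exp_mul_le_quadratic_add_rpow_of_le {p t y δ z : ℝ} (hp : 0 ≤ p) (ht : 0 < t)
    (hδ : 0 < δ) (hδ1 : δ ≤ 1) (hz : z ≤ y) :
    exp (t * z) ≤ 1 + t * z + (1 + δ / 2) * (t * z) ^ 2 / 2 +
      exp (t * y) * (2 * t / δ) ^ p * max z 0 ^ p := by
  have hrem : 0 ≤ exp (t * y) * (2 * t / δ) ^ p * max z 0 ^ p := by positivity
  rcases le_or_gt z 0 with hz0 | hz0
  · have := exp_le_one_add_add_sq_div_two_of_nonpos (mul_nonpos_of_nonneg_of_nonpos ht.le hz0)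
    nlinarith [sq_nonneg (t * z)]
  rcases le_or_gt (t * z) (δ / 2) with hsmall | hbig
  · linarith [exp_le_one_add_add_mul_sq_of_le_half (by positivity) hsmall hδ1]
  · have hone : 1 ≤ (2 * t / δ) ^ p * max z 0 ^ p := by
      rw [max_eq_left hz0.le, ← mul_rpow (by positivity) hz0.le]
      refine one_le_rpow ?_ hp
      rw [div_mul_eq_mul_div, le_div_iff₀ hδ]
      linarith
    calc exp (t * z) ≤ exp (t * y) := exp_le_exp.2 (by gcongr)
      _ ≤ exp (t * y) * ((2 * t / δ) ^ p * max z 0 ^ p) :=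
        le_mul_of_one_le_right (exp_pos _).le hone
      _ ≤ _ := by rw [← mul_assoc]; nlinarith

lemma Real.exp_mul_min_le_quadratic_add_rpow {p t y δ z : ℝ} (hp : 0 ≤ p) (ht : 0 < t)
    (hy : 0 ≤ y) (hδ : 0 < δ) (hδ1 : δ ≤ 1) :
    exp (t * min z y) ≤ 1 + t * min z y + (1 + δ / 2) * t ^ 2 / 2 * z ^ 2 +
      exp (t * y) * (2 * t / δ) ^ p * max z 0 ^ p := by
  have hsq : min z y ^ 2 ≤ z ^ 2 := by
    rcases min_cases z y with ⟨h, _⟩ | ⟨h, hyz⟩ <;> rw [h]; nlinarith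
  have hpart : max (min z y) 0 ^ p ≤ max z 0 ^ p :=
    rpow_le_rpow (le_max_right _ _) (max_le_max_right 0 (min_le_left z y)) hp
  have := exp_mul_le_quadratic_add_rpow_of_le hp ht hδ hδ1 (min_le_right z y)
  have : (1 + δ / 2) * (t * min z y) ^ 2 / 2 ≤ (1 + δ / 2) * t ^ 2 / 2 * z ^ 2 := by
    have : 0 ≤ (1 + δ / 2) * t ^ 2 / 2 := by positivity
    nlinarith
  have : exp (t * y) * (2 * t / δ) ^ p * max (min z y) 0 ^ p ≤
      exp (t * y) * (2 * t / δ) ^ p * max z 0 ^ p := by gcongr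
  linarith

lemma Real.exists_pos_exp_mul_le_one {D s : ℝ} (hD0 : 0 ≤ D) (hD1 : D < 1) (hs : 0 < s) :
    ∃ σ, 0 < σ ∧ σ ≤ s ∧ exp σ * D ≤ 1 ∧ exp (-σ) ≤ D + exp (-s) := by
  rcases hD0.eq_or_lt with rfl | hD
  · exact ⟨s, hs, le_rfl, by simp, by simp⟩
  refine ⟨min s (-log D), lt_min hs (neg_pos.2 (log_neg hD hD1)), min_le_left _ _, ?_, ?_⟩
  · calc exp (min s (-log D)) * D ≤ exp (-log D) * D := by gcongr; exact min_le_right _ _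
      _ = 1 := by rw [exp_neg, exp_log hD, inv_mul_cancel₀ hD.ne']
  · rcases min_cases s (-log D) with ⟨h, _⟩ | ⟨h, _⟩ <;> rw [h]
    · linarith
    · rw [neg_neg, exp_log hD]
      linarith [exp_pos (-s)]

lemma Real.exp_chernoff_exponent_le {p x δ σ A B : ℝ} (hp : 0 < p) (hx : 0 < x) (hδ : 0 < δ)
    (hδ1 : δ ≤ 1) (hσ : 0 < σ) (hA : 0 ≤ A) (hB : 0 < B)
    (hσB : σ ≤ x ^ 2 / (2 * (1 + δ) * B))
    (hσD : exp σ * (2 * (8 * p) ^ p * δ ^ (-p) * x ^ (-p) * A) ≤ 1) :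
    exp (-(2 * σ / x * x) + ((1 + δ / 2) * (2 * σ / x) ^ 2 / 2 * B +
        exp (2 * σ / x * (δ * x / 4)) * (2 * (2 * σ / x) / δ) ^ p * A)) ≤
      exp (-σ) + 2 * (8 * p) ^ p * δ ^ (-p) * x ^ (-p) * A := by
  set D := 2 * (8 * p) ^ p * δ ^ (-p) * x ^ (-p) * A
  set R := exp (2 * σ / x * (δ * x / 4)) * (2 * (2 * σ / x) / δ) ^ p * A
  have hlinear : 2 * σ / x * x = 2 * σ := div_mul_cancel₀ _ hx.ne'
  have hquad : (1 + δ / 2) * (2 * σ / x) ^ 2 / 2 * B ≤ σ := by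
    rw [le_div_iff₀ (by positivity)] at hσB
    rw [div_pow, ← sub_nonneg]
    have : σ - (1 + δ / 2) * ((2 * σ) ^ 2 / x ^ 2) / 2 * B =
        σ * (x ^ 2 - (2 + δ) * σ * B) / x ^ 2 := by field_simp
    rw [this]
    have : 0 ≤ x ^ 2 - (2 + δ) * σ * B := by nlinarith
    positivity
  have hscale : (2 * (2 * σ / x) / δ) ^ p = 8 ^ p * (σ / 2) ^ p * (δ ^ (-p) * x ^ (-p)) := by
    rw [rpow_neg hδ.le, rpow_neg hx.le, ← mul_inv, ← mul_rpow hδ.le hx.le,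
      ← inv_rpow (by positivity), ← mul_rpow (by norm_num) (by positivity),
      ← mul_rpow (by positivity) (by positivity)]
    congr 1
    field_simp
    ring
  have hR : R ≤ exp σ * D / 2 := by
    have hexp : exp (2 * σ / x * (δ * x / 4)) ≤ exp (σ / 2) := by
      rw [exp_le_exp, show 2 * σ / x * (δ * x / 4) = σ / 2 * δ by field_simp; ring]
      exact mul_le_of_le_one_right (by positivity) hδ1
    calc R ≤ exp (σ / 2) * (8 ^ p * (p ^ p * exp (σ / 2)) * (δ ^ (-p) * x ^ (-p))) * A := by
          simp only [R, hscale]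
          gcongr
          exact rpow_le_rpow_self_mul_exp (by positivity) hp
      _ = exp σ * D / 2 := by
          simp only [D]
          rw [show exp σ = exp (σ / 2) * exp (σ / 2) by rw [← exp_add, add_halves],
            mul_rpow (by norm_num) hp.le]
          ring
  have hR0 : 0 ≤ R := by positivity
  calc exp (-(2 * σ / x * x) + ((1 + δ / 2) * (2 * σ / x) ^ 2 / 2 * B + R))
      ≤ exp (-σ + R) := exp_le_exp.2 (by linarith)
    _ = exp (-σ) * exp R := exp_add _ _
    _ ≤ exp (-σ) * (1 + exp σ * D) := by
        gcongr
        linarith [exp_le_one_add_two_mul hR0 (by linarith)]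
    _ = exp (-σ) + D := by rw [mul_add, ← mul_assoc, ← exp_add]; simp

lemma Finset.prod_range_le_prod_Ico_mul_prod_max_one {m : ℕ → ℝ} (hm : ∀ i, 0 ≤ m i) {k n : ℕ}
    (hk : k ≤ n) : ∏ i ∈ range n, m i ≤ (∏ i ∈ Ico k n, m i) * ∏ i ∈ range n, max (m i) 1 := by
  rw [← prod_range_mul_prod_Ico m hk, mul_comm]
  gcongr
  · exact prod_nonneg fun i _ => hm i
  calc ∏ i ∈ range k, m i ≤ ∏ i ∈ range k, max (m i) 1 :=
        prod_le_prod (fun i _ => hm i) fun i _ => le_max_left _ _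
    _ ≤ ∏ i ∈ range n, max (m i) 1 :=
        prod_le_prod_of_subset_of_one_le (range_subset_range.2 hk)
          (fun i _ => zero_le_one.trans (le_max_right _ _)) fun i _ _ => le_max_right _ _

section FirstPassage

variable {Ω : Type*}

def firstPassage (T : ℕ → Ω → ℝ) (x : ℝ) (k : ℕ) : Set Ω :=
  {ω | x ≤ T k ω ∧ ∀ j < k, T j ω < x}

open Function in
lemma pairwise_disjoint_firstPassage (T : ℕ → Ω → ℝ) (x : ℝ) :
    Pairwise (Disjoint on (firstPassage T x)) := by
  intro a b hab
  wlog h : a < b generalizing a b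
  · exact (this hab.symm (hab.symm.lt_of_le (not_lt.1 h))).symm
  exact Set.disjoint_left.2 fun ω ha hb => (hb.2 a h).not_ge ha.1

lemma setOf_exists_le_subset_biUnion_firstPassage (T : ℕ → Ω → ℝ) (x : ℝ) (n : ℕ) :
    {ω | ∃ k ≤ n, x ≤ T k ω} ⊆ ⋃ k ∈ range (n + 1), firstPassage T x k := by
  classical
  intro ω hω
  have hfind := Nat.find_spec hω
  refine Set.mem_iUnion₂.2 ⟨Nat.find hω, mem_range.2 (Nat.lt_succ_of_le hfind.1), hfind.2,
    fun j hj => ?_⟩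
  exact lt_of_not_ge fun h => Nat.find_min hω hj ⟨hj.le.trans hfind.1, h⟩

lemma measurableSet_firstPassage {m : MeasurableSpace Ω} {T : ℕ → Ω → ℝ} (x : ℝ) {k : ℕ}
    (hT : ∀ j ≤ k, Measurable (T j)) : MeasurableSet (firstPassage T x k) := by
  have : firstPassage T x k = {ω | x ≤ T k ω} ∩ ⋂ j, ⋂ (_ : j < k), {ω | T j ω < x} := by
    ext ω
    simp [firstPassage]
  rw [this]
  exact (measurableSet_le measurable_const (hT k le_rfl)).inter <|
    .iInter fun j => .iInter fun hj => measurableSet_lt (hT j hj.le) measurable_const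

end FirstPassage

section MaximalChernoff

variable {Ω : Type*} [MeasurableSpace Ω] {P : Measure Ω} {Y : ℕ → Ω → ℝ}

-- On the first-passage event at time `k`, the increment after time `k` is independent of the past.
lemma setIntegral_firstPassage_exp_mul_sum (hY : ∀ i, Measurable (Y i)) (hind : iIndepFun Y P)
    (t x : ℝ) {k n : ℕ} (hk : k ≤ n) :
    ∫ ω in firstPassage (fun j ω => ∑ i ∈ range j, Y i ω) x k, exp (t * ∑ i ∈ range n, Y i ω) ∂P =
      (∫ ω in firstPassage (fun j ω => ∑ i ∈ range j, Y i ω) x k,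
        exp (t * ∑ i ∈ range k, Y i ω) ∂P) * ∏ i ∈ Ico k n, mgf (Y i) P t := by
  set E := firstPassage (fun j ω => ∑ i ∈ range j, Y i ω) x k
  let F : ℕ → MeasurableSpace Ω := fun i => MeasurableSpace.comap (Y i) inferInstance
  have hF : ∀ i, F i ≤ ‹MeasurableSpace Ω› := fun i => (hY i).comap_le
  have hindep : Indep (⨆ i ∈ Set.Iio k, F i) (⨆ i ∈ Set.Ici k, F i) P :=
    indep_iSup_of_disjoint hF hind.iIndep (Set.Iio_disjoint_Ici le_rfl)
  have hpast : ∀ j ≤ k, Measurable[⨆ i ∈ Set.Iio k, F i] fun ω => ∑ i ∈ range j, Y i ω :=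
    fun j hj => Finset.measurable_sum _ fun i hi => (comap_measurable (Y i)).mono
      (le_iSup₂ (f := fun i (_ : i ∈ Set.Iio k) => F i) i
        (Set.mem_Iio.2 ((mem_range.1 hi).trans_le hj))) le_rfl
  have hfuture : Measurable[⨆ i ∈ Set.Ici k, F i] fun ω => ∑ i ∈ Ico k n, Y i ω :=
    Finset.measurable_sum _ fun i hi => (comap_measurable (Y i)).mono
      (le_iSup₂ (f := fun i (_ : i ∈ Set.Ici k) => F i) i (mem_Ico.1 hi).1) le_rfl
  have hEpast : MeasurableSet[⨆ i ∈ Set.Iio k, F i] E := measurableSet_firstPassage x hpast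
  have hE : MeasurableSet E := iSup₂_le (fun i _ => hF i) _ hEpast
  have hg₁ := ((hpast k le_rfl).const_mul t).exp.indicator hEpast
  have hg₂ := (hfuture.const_mul t).exp
  have hg : IndepFun (E.indicator fun ω => exp (t * ∑ i ∈ range k, Y i ω))
      (fun ω => exp (t * ∑ i ∈ Ico k n, Y i ω)) P :=
    (IndepFun_iff_Indep _ _ _).2 (indep_of_indep_of_le hindep hg₁.comap_le hg₂.comap_le)
  have hsplit : E.indicator (fun ω => exp (t * ∑ i ∈ range n, Y i ω)) =
      fun ω => E.indicator (fun ω => exp (t * ∑ i ∈ range k, Y i ω)) ω *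
        exp (t * ∑ i ∈ Ico k n, Y i ω) := by
    ext ω
    by_cases hω : ω ∈ E
    · simp [hω, ← exp_add, ← sum_range_add_sum_Ico _ hk, mul_add]
    · simp [hω]
  rw [← integral_indicator hE, ← integral_indicator hE, hsplit,
    hg.integral_fun_mul_eq_mul_integral
      (hg₁.mono (iSup₂_le fun i _ => hF i) le_rfl).aestronglyMeasurable
      (hg₂.mono (iSup₂_le fun i _ => hF i) le_rfl).aestronglyMeasurable,
    ← hind.mgf_sum hY]
  simp only [mgf, Finset.sum_apply]

-- The factor `∏ max (mgf (Y i) P t) 1` absorbs the moment generating functions before time `k`,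
-- which may be smaller than `1`.
lemma exp_mul_mul_measureReal_firstPassage_le [IsProbabilityMeasure P]
    (hY : ∀ i, Measurable (Y i)) (hind : iIndepFun Y P) {t : ℝ} (ht : 0 ≤ t)
    (hint : ∀ i, Integrable (fun ω => exp (t * Y i ω)) P) (x : ℝ) {k n : ℕ} (hk : k ≤ n) :
    exp (t * x) * P.real (firstPassage (fun j ω => ∑ i ∈ range j, Y i ω) x k) *
        ∏ i ∈ range n, mgf (Y i) P t ≤
      (∏ i ∈ range n, max (mgf (Y i) P t) 1) *
        ∫ ω in firstPassage (fun j ω => ∑ i ∈ range j, Y i ω) x k,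
          exp (t * ∑ i ∈ range n, Y i ω) ∂P := by
  set E := firstPassage (fun j ω => ∑ i ∈ range j, Y i ω) x k
  have hE : MeasurableSet E :=
    measurableSet_firstPassage x fun j _ => Finset.measurable_sum _ fun i _ => hY i
  have hint_k : Integrable (fun ω => exp (t * ∑ i ∈ range k, Y i ω)) P := by
    simpa only [Finset.sum_apply] using hind.integrable_exp_mul_sum hY fun i _ => hint i
  have hlower : exp (t * x) * P.real E ≤ ∫ ω in E, exp (t * ∑ i ∈ range k, Y i ω) ∂P :=
    setIntegral_ge_of_const_le_real hE (measure_ne_top P E)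
      (fun ω hω => exp_le_exp.2 (mul_le_mul_of_nonneg_left hω.1 ht)) hint_k.integrableOn
  calc exp (t * x) * P.real E * ∏ i ∈ range n, mgf (Y i) P t
      ≤ exp (t * x) * P.real E *
          ((∏ i ∈ Ico k n, mgf (Y i) P t) * ∏ i ∈ range n, max (mgf (Y i) P t) 1) := by
        gcongr
        exact prod_range_le_prod_Ico_mul_prod_max_one (fun i => (mgf_pos (hint i)).le) hk
    _ ≤ (∫ ω in E, exp (t * ∑ i ∈ range k, Y i ω) ∂P) *
          ((∏ i ∈ Ico k n, mgf (Y i) P t) * ∏ i ∈ range n, max (mgf (Y i) P t) 1) := by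
        gcongr
        exact mul_nonneg (prod_nonneg fun i _ => (mgf_pos (hint i)).le)
          (prod_nonneg fun i _ => zero_le_one.trans (le_max_right _ _))
    _ = _ := by rw [setIntegral_firstPassage_exp_mul_sum hY hind t x hk]; ring

theorem measureReal_exists_sum_ge_le [IsProbabilityMeasure P] (hY : ∀ i, Measurable (Y i))
    (hind : iIndepFun Y P) {t : ℝ} (ht : 0 ≤ t)
    (hint : ∀ i, Integrable (fun ω => exp (t * Y i ω)) P) (x : ℝ) (n : ℕ) :
    P.real {ω | ∃ k ≤ n, x ≤ ∑ i ∈ range k, Y i ω} ≤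
      exp (-(t * x)) * ∏ i ∈ range n, max (mgf (Y i) P t) 1 := by
  set T : ℕ → Ω → ℝ := fun j ω => ∑ i ∈ range j, Y i ω
  set M := ∏ i ∈ range n, max (mgf (Y i) P t) 1
  have hE : ∀ k, MeasurableSet (firstPassage T x k) := fun k =>
    measurableSet_firstPassage x fun j _ => Finset.measurable_sum _ fun i _ => hY i
  have hint_n : Integrable (fun ω => exp (t * T n ω)) P := by
    simpa only [Finset.sum_apply] using hind.integrable_exp_mul_sum hY fun i _ => hint i
  have hprod : 0 < ∏ i ∈ range n, mgf (Y i) P t := prod_pos fun i _ => mgf_pos (hint i)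
  have hmain : exp (t * x) * P.real {ω | ∃ k ≤ n, x ≤ T k ω} * ∏ i ∈ range n, mgf (Y i) P t ≤
      M * ∏ i ∈ range n, mgf (Y i) P t :=
    calc exp (t * x) * P.real {ω | ∃ k ≤ n, x ≤ T k ω} * ∏ i ∈ range n, mgf (Y i) P t
        ≤ ∑ k ∈ range (n + 1),
            exp (t * x) * P.real (firstPassage T x k) * ∏ i ∈ range n, mgf (Y i) P t := by
          rw [← sum_mul, ← mul_sum]
          gcongr
          exact (measureReal_mono (setOf_exists_le_subset_biUnion_firstPassage T x n)
            (measure_ne_top P _)).trans (measureReal_biUnion_finset_le _ _)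
      _ ≤ ∑ k ∈ range (n + 1), M * ∫ ω in firstPassage T x k, exp (t * T n ω) ∂P :=
          sum_le_sum fun k hk => exp_mul_mul_measureReal_firstPassage_le hY hind ht hint x
            (Nat.lt_succ_iff.1 (mem_range.1 hk))
      _ = M * ∫ ω in ⋃ k ∈ range (n + 1), firstPassage T x k, exp (t * T n ω) ∂P := by
          rw [← mul_sum, integral_biUnion_finset _ (fun k _ => hE k)
            ((pairwise_disjoint_firstPassage T x).set_pairwise _) fun k _ => hint_n.integrableOn]
      _ ≤ M * ∫ ω, exp (t * T n ω) ∂P := by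
          gcongr
          · exact ae_of_all _ fun ω => (exp_pos _).le
          · exact Measure.restrict_le_self
      _ = M * ∏ i ∈ range n, mgf (Y i) P t := by
          rw [← hind.mgf_sum hY]
          simp only [T, mgf, Finset.sum_apply]
  rw [exp_neg, ← div_eq_inv_mul, le_div_iff₀' (exp_pos _)]
  exact le_of_mul_le_mul_right hmain hprod

end MaximalChernoff

lemma MeasureTheory.MemLp.integrable_max_zero_rpow {Ω : Type*} [MeasurableSpace Ω]
    {P : Measure Ω} [IsFiniteMeasure P] {X : Ω → ℝ} {p : ℝ} (hp : 0 ≤ p)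
    (hX : MemLp X (ENNReal.ofReal p) P) : Integrable (fun ω => max (X ω) 0 ^ p) P := by
  have h := (hX.sup (MemLp.zero (ε := ℝ))).integrable_norm_rpow'
  simp only [ENNReal.toReal_ofReal hp, Pi.sup_apply, Pi.zero_apply] at h
  refine h.congr (ae_of_all _ fun ω => ?_)
  simp only [norm_of_nonneg (le_max_right (X ω) 0)]

lemma setOf_exists_sum_ge_subset {Ω : Type*} (X : ℕ → Ω → ℝ) (x y : ℝ) (n : ℕ) :
    {ω | ∃ k ≤ n, x ≤ ∑ i ∈ range k, X i ω} ⊆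
      {ω | ∃ i < n, y < X i ω} ∪ {ω | ∃ k ≤ n, x ≤ ∑ i ∈ range k, min (X i ω) y} := by
  rintro ω ⟨k, hk, hx⟩
  by_cases h : ∃ i < n, y < X i ω
  · exact Or.inl h
  simp only [not_exists, not_and, not_lt] at h
  refine Or.inr ⟨k, hk, hx.trans_eq (sum_congr rfl fun i hi => ?_)⟩
  exact (min_eq_left (h i ((mem_range.1 hi).trans_le hk))).symm

section TruncatedMGF

variable {Ω : Type*} [MeasurableSpace Ω] {P : Measure Ω} {X : Ω → ℝ}

lemma integrable_exp_mul_min [IsFiniteMeasure P] (hX : Measurable X) {t : ℝ} (ht : 0 ≤ t)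
    (y : ℝ) : Integrable (fun ω => exp (t * min (X ω) y)) P :=
  .of_bound (by fun_prop) (exp (t * y)) <| ae_of_all _ fun ω => by
    rw [norm_of_nonneg (exp_pos _).le, exp_le_exp]
    exact mul_le_mul_of_nonneg_left (min_le_right _ _) ht

lemma mgf_min_le [IsProbabilityMeasure P] {p t y δ : ℝ} (hX : Measurable X) (hp : 0 ≤ p)
    (ht : 0 < t) (hy : 0 ≤ y) (hδ : 0 < δ) (hδ1 : δ ≤ 1) (hint : Integrable X P)
    (hint2 : Integrable (fun ω => X ω ^ 2) P) (hintp : Integrable (fun ω => max (X ω) 0 ^ p) P)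
    (hmean : ∫ ω, X ω ∂P = 0) :
    mgf (fun ω => min (X ω) y) P t ≤
      exp ((1 + δ / 2) * t ^ 2 / 2 * ∫ ω, X ω ^ 2 ∂P +
        exp (t * y) * (2 * t / δ) ^ p * ∫ ω, max (X ω) 0 ^ p ∂P) := by
  set a := (1 + δ / 2) * t ^ 2 / 2
  set b := exp (t * y) * (2 * t / δ) ^ p
  have hmin : Integrable (fun ω => min (X ω) y) P := hint.inf (integrable_const y)
  have hmin_le : ∫ ω, min (X ω) y ∂P ≤ 0 :=
    hmean ▸ integral_mono hmin hint fun ω => min_le_left _ _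
  have hint1 : Integrable (fun ω => 1 + t * min (X ω) y) P :=
    (integrable_const 1).add (hmin.const_mul t)
  have hint12 : Integrable (fun ω => 1 + t * min (X ω) y + a * X ω ^ 2) P :=
    hint1.add (hint2.const_mul a)
  calc mgf (fun ω => min (X ω) y) P t
      ≤ ∫ ω, (1 + t * min (X ω) y + a * X ω ^ 2 + b * max (X ω) 0 ^ p) ∂P :=
        integral_mono (integrable_exp_mul_min hX ht.le y) (hint12.add (hintp.const_mul b))
          fun ω => exp_mul_min_le_quadratic_add_rpow hp ht hy hδ hδ1
    _ = 1 + t * ∫ ω, min (X ω) y ∂P + a * ∫ ω, X ω ^ 2 ∂P + b * ∫ ω, max (X ω) 0 ^ p ∂P := by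
        rw [integral_add hint12 (hintp.const_mul b), integral_add hint1 (hint2.const_mul a),
          integral_add (integrable_const 1) (hmin.const_mul t), integral_const_mul,
          integral_const_mul, integral_const_mul]
        simp
    _ ≤ _ := by
        nlinarith [add_one_le_exp (a * ∫ ω, X ω ^ 2 ∂P + b * ∫ ω, max (X ω) 0 ^ p ∂P)]

end TruncatedMGF

section Truncation

variable {Ω : Type*} [MeasurableSpace Ω] {P : Measure Ω} {X : ℕ → Ω → ℝ}

lemma measureReal_exists_lt_le [IsFiniteMeasure P] {p y : ℝ} (hp : 0 ≤ p) (hy : 0 < y)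
    (hint : ∀ i, Integrable (fun ω => max (X i ω) 0 ^ p) P) (n : ℕ) :
    P.real {ω | ∃ i < n, y < X i ω} ≤ (∑ i ∈ range n, ∫ ω, max (X i ω) 0 ^ p ∂P) / y ^ p := by
  have hmarkov : ∀ i, P.real {ω | y < X i ω} ≤ (∫ ω, max (X i ω) 0 ^ p ∂P) / y ^ p := by
    intro i
    rw [le_div_iff₀' (by positivity)]
    calc y ^ p * P.real {ω | y < X i ω} ≤ y ^ p * P.real {ω | y ^ p ≤ max (X i ω) 0 ^ p} := by
          refine mul_le_mul_of_nonneg_left (measureReal_mono fun ω hω => ?_) (by positivity)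
          exact rpow_le_rpow hy.le (le_max_of_le_left (le_of_lt hω)) hp
      _ ≤ _ := mul_meas_ge_le_integral_of_nonneg (ae_of_all _ fun ω => by positivity) (hint i) _
  have hunion : {ω | ∃ i < n, y < X i ω} = ⋃ i ∈ range n, {ω | y < X i ω} := by
    ext ω
    simp
  rw [hunion, sum_div]
  exact (measureReal_biUnion_finset_le _ _).trans (sum_le_sum fun i _ => hmarkov i)

lemma measureReal_exists_sum_min_ge_le [IsProbabilityMeasure P] (hX : ∀ i, Measurable (X i))
    (hind : iIndepFun X P) (hint : ∀ i, Integrable (X i) P)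
    (hint2 : ∀ i, Integrable (fun ω => X i ω ^ 2) P)
    {p t y δ : ℝ} (hintp : ∀ i, Integrable (fun ω => max (X i ω) 0 ^ p) P)
    (hmean : ∀ i, ∫ ω, X i ω ∂P = 0) (hp : 0 ≤ p) (ht : 0 < t) (hy : 0 ≤ y) (hδ : 0 < δ)
    (hδ1 : δ ≤ 1) (x : ℝ) (n : ℕ) :
    P.real {ω | ∃ k ≤ n, x ≤ ∑ i ∈ range k, min (X i ω) y} ≤
      exp (-(t * x) + ((1 + δ / 2) * t ^ 2 / 2 * ∑ i ∈ range n, ∫ ω, X i ω ^ 2 ∂P +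
        exp (t * y) * (2 * t / δ) ^ p * ∑ i ∈ range n, ∫ ω, max (X i ω) 0 ^ p ∂P)) := by
  have hind' : iIndepFun (fun i ω => min (X i ω) y) P :=
    hind.comp (fun _ (z : ℝ) => min z y) fun _ => measurable_id.min measurable_const
  refine (measureReal_exists_sum_ge_le (fun i => (hX i).min measurable_const) hind' ht.le
    (fun i => integrable_exp_mul_min (hX i) ht.le y) x n).trans ?_
  rw [exp_add, mul_sum, mul_sum, ← sum_add_distrib, exp_sum]
  gcongr with i
  refine max_le (mgf_min_le (hX i) hp ht hy hδ hδ1 (hint i) (hint2 i) (hintp i) (hmean i))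
    (one_le_exp ?_)
  have : 0 ≤ ∫ ω, X i ω ^ 2 ∂P := integral_nonneg fun ω => sq_nonneg (X i ω)
  have : 0 ≤ ∫ ω, max (X i ω) 0 ^ p ∂P :=
    integral_nonneg fun ω => rpow_nonneg (le_max_right (X i ω) 0) p
  positivity

lemma measureReal_exists_sum_min_ge_le_add_exp [IsProbabilityMeasure P]
    (hX : ∀ i, Measurable (X i)) (hind : iIndepFun X P) (hint : ∀ i, Integrable (X i) P)
    (hint2 : ∀ i, Integrable (fun ω => X i ω ^ 2) P) {p x δ : ℝ}
    (hintp : ∀ i, Integrable (fun ω => max (X i ω) 0 ^ p) P) (hmean : ∀ i, ∫ ω, X i ω ∂P = 0)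
    (hp : 0 < p) (hx : 0 < x) (hδ : 0 < δ) (hδ1 : δ ≤ 1) (n : ℕ) :
    P.real {ω | ∃ k ≤ n, x ≤ ∑ i ∈ range k, min (X i ω) (δ * x / 4)} ≤
      2 * (2 * (8 * p) ^ p * δ ^ (-p) * x ^ (-p) * ∑ i ∈ range n, ∫ ω, max (X i ω) 0 ^ p ∂P) +
        exp (-(x ^ 2) / (2 * (1 + δ) * ∑ i ∈ range n, ∫ ω, X i ω ^ 2 ∂P)) := by
  set A := ∑ i ∈ range n, ∫ ω, max (X i ω) 0 ^ p ∂P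
  set B := ∑ i ∈ range n, ∫ ω, X i ω ^ 2 ∂P
  set D := 2 * (8 * p) ^ p * δ ^ (-p) * x ^ (-p) * A
  have hA : 0 ≤ A :=
    sum_nonneg fun i _ => integral_nonneg fun ω => rpow_nonneg (le_max_right (X i ω) 0) p
  have hB : 0 ≤ B := sum_nonneg fun i _ => integral_nonneg fun ω => sq_nonneg (X i ω)
  have hD : 0 ≤ D := by positivity
  have hprob : P.real {ω | ∃ k ≤ n, x ≤ ∑ i ∈ range k, min (X i ω) (δ * x / 4)} ≤ 1 :=
    measureReal_le_one
  -- For `B = 0` the exponential term is `exp (-(x ^ 2) / 0) = exp 0 = 1`.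
  rcases hB.eq_or_lt with hB0 | hBpos
  · rw [← hB0, mul_zero, div_zero, exp_zero]
    linarith
  rcases le_or_gt 1 D with hD1 | hD1
  · linarith [exp_pos (-(x ^ 2) / (2 * (1 + δ) * B))]
  obtain ⟨σ, hσ, hσB, hσD, hσexp⟩ :=
    exists_pos_exp_mul_le_one hD hD1 (s := x ^ 2 / (2 * (1 + δ) * B)) (by positivity)
  calc _ ≤ _ := measureReal_exists_sum_min_ge_le hX hind hint hint2 hintp hmean hp.le
        (t := 2 * σ / x) (by positivity) (by positivity) hδ hδ1 x n
    _ ≤ exp (-σ) + D := exp_chernoff_exponent_le hp hx hδ hδ1 hσ hA hBpos hσB hσD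
    _ ≤ 2 * D + exp (-(x ^ 2) / (2 * (1 + δ) * B)) := by rw [neg_div]; linarith

end Truncation

theorem fuk_nagaev_maximal_inequality (p : ℝ) (hp : 2 ≤ p) :
    ∃ C : ℝ, 0 < C ∧
      ∀ (Ω : Type) (_ : MeasurableSpace Ω) (P : Measure Ω),
        IsProbabilityMeasure P →
        ∀ (n : ℕ) (X : ℕ → Ω → ℝ), (∀ i, Measurable (X i)) →
          iIndepFun X P →
          (∀ i, MemLp (X i) 2 P) →
          (∀ i, MemLp (X i) (ENNReal.ofReal p) P) →
          (∀ i, ∫ ω, X i ω ∂P = 0) →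
          ∀ x δ : ℝ, 0 < x → 0 < δ → δ ≤ 1 →
            P {ω | ∃ k ≤ n, x ≤ ∑ i ∈ Finset.range k, X i ω} ≤
              ENNReal.ofReal
                (C * δ ^ (-p) * x ^ (-p) *
                    ∑ i ∈ Finset.range n, ∫ ω, (max (X i ω) 0) ^ p ∂P +
                  Real.exp (-(x ^ 2) /
                    (2 * (1 + δ) * ∑ i ∈ Finset.range n, ∫ ω, (X i ω) ^ 2 ∂P))) := by
  refine ⟨4 ^ p + 4 * (8 * p) ^ p, by positivity, ?_⟩
  intro Ω _ P _ n X hX hind hL2 hLp hmean x δ hx hδ hδ1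
  have hp0 : 0 < p := by linarith
  have hintp := fun i => (hLp i).integrable_max_zero_rpow hp0.le
  set A := ∑ i ∈ range n, ∫ ω, max (X i ω) 0 ^ p ∂P
  set y := δ * x / 4
  rw [← ofReal_measureReal]
  refine ENNReal.ofReal_le_ofReal ?_
  calc _ ≤ P.real {ω | ∃ i < n, y < X i ω} +
        P.real {ω | ∃ k ≤ n, x ≤ ∑ i ∈ range k, min (X i ω) y} :=
        (measureReal_mono (setOf_exists_sum_ge_subset X x y n)).trans (measureReal_union_le _ _)
    _ ≤ A / y ^ p + (2 * (2 * (8 * p) ^ p * δ ^ (-p) * x ^ (-p) * A) +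
          exp (-(x ^ 2) / (2 * (1 + δ) * ∑ i ∈ range n, ∫ ω, X i ω ^ 2 ∂P))) :=
        add_le_add (measureReal_exists_lt_le hp0.le (by positivity) hintp n)
          (measureReal_exists_sum_min_ge_le_add_exp hX hind
            (fun i => (hL2 i).integrable one_le_two) (fun i => (hL2 i).integrable_sq) hintp
            hmean hp0 hx hδ hδ1 n)
    _ = _ := by
        rw [div_rpow (by positivity) (by norm_num), mul_rpow hδ.le hx.le, rpow_neg hδ.le,
          rpow_neg hx.le]
        field_simp
        ring
end
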